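/- Let X be a countable set and let P, H_i, H_j be probability distributions on X. Let S = {x ∈ X : H_i(x) < H_j(x)} be the Scheffé set of the pair (H_i, H_j). Then d_TV(P, H_j) ≤ 2·d_TV(P, H_i) + |H_j(S) − P(S)|. (Proposition 1.10, second statement: the source of the 3-approximation.) -/
import Mathlib

private lemma tsum_max_zero_eq {X : Type*} (f : X → ℝ) (hf : Summable f)
    (h0 : ∑' x, f x = 0) : ∑' x, max (f x) 0 = (1/2) * ∑' x, |f x| := by
  have hcongr : ∀ x, max (f x) 0 = (1/2) * (f x + |f x|) := by
    intro x
    rcases le_total 0 (f x) with h | h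
    · rw [max_eq_left h, abs_of_nonneg h]; ring
    · rw [max_eq_right h, abs_of_nonpos h]; ring
  calc ∑' x, max (f x) 0 = ∑' x, (1/2) * (f x + |f x|) := tsum_congr hcongr
    _ = (1/2) * ∑' x, (f x + |f x|) := tsum_mul_left
    _ = (1/2) * (∑' x, f x + ∑' x, |f x|) := by rw [Summable.tsum_add hf hf.abs]
    _ = (1/2) * ∑' x, |f x| := by rw [h0]; ring

private lemma summable_max_zero {X : Type*} (f : X → ℝ) (hf : Summable f) :
    Summable (fun x => max (f x) 0) :=
  hf.abs.of_nonneg_of_le (fun x => le_max_right _ _)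
    (fun x => max_le (le_abs_self _) (abs_nonneg _))

private lemma indicator_le_max {X : Type*} (f : X → ℝ) (A : Set X) (x : X) :
    A.indicator f x ≤ max (f x) 0 := by
  classical
  by_cases hx : x ∈ A
  · rw [Set.indicator_of_mem hx]; exact le_max_left _ _
  · rw [Set.indicator_of_notMem hx]; exact le_max_right _ _

private lemma abs_tsum_subtype_le {X : Type*} (f : X → ℝ) (hf : Summable f)
    (h0 : ∑' x, f x = 0) (A : Set X) :
    |∑' x : A, f x| ≤ (1/2) * ∑' x, |f x| := by
  rw [tsum_subtype]
  rw [abs_le]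
  constructor
  · have hneg : ∑' x, A.indicator (fun y => -f y) x ≤ (1/2) * ∑' x, |f x| := by
      have h1 : ∑' x, A.indicator (fun y => -f y) x ≤ ∑' x, max (-f x) 0 :=
        Summable.tsum_le_tsum (indicator_le_max _ A) (hf.neg.indicator A)
          (summable_max_zero _ hf.neg)
      have h2 : ∑' x, max (-f x) 0 = (1/2) * ∑' x, |(-f x)| :=
        tsum_max_zero_eq _ hf.neg (by rw [tsum_neg, h0, neg_zero])
      simp only [abs_neg] at h2
      linarith
    have heq : ∑' x, A.indicator (fun y => -f y) x = -∑' x, A.indicator f x := by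
      rw [← tsum_neg]
      congr 1
      funext x
      classical
      by_cases hx : x ∈ A <;> simp [Set.indicator, hx]
    linarith [heq ▸ hneg]
  · have h1 : ∑' x, A.indicator f x ≤ ∑' x, max (f x) 0 :=
      Summable.tsum_le_tsum (indicator_le_max f A) (hf.indicator A) (summable_max_zero f hf)
    have h2 := tsum_max_zero_eq f hf h0
    linarith

/-- **Proposition 1.10, second statement** (the source of the 3-approximation).
For probability distributions `P, Hi, Hj` on a countable set `X` and the Scheffé set
`S = {x | Hi x < Hj x}`, we have
`d_TV(P, Hj) ≤ 2 · d_TV(P, Hi) + |Hj(S) − P(S)|`,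
where `d_TV(P, Q) = (1/2) · Σ_x |P x - Q x|` and `Q(S) = Σ_{x∈S} Q x`. -/
theorem semidist_approx_second {X : Type*} [Countable X]
    (P Hi Hj : X → ℝ)
    (hP0 : ∀ x, 0 ≤ P x) (hPs : Summable P) (hP1 : ∑' x, P x = 1)
    (hHi0 : ∀ x, 0 ≤ Hi x) (hHis : Summable Hi) (hHi1 : ∑' x, Hi x = 1)
    (hHj0 : ∀ x, 0 ≤ Hj x) (hHjs : Summable Hj) (hHj1 : ∑' x, Hj x = 1)
    (S : Set X) (hS : S = {x | Hi x < Hj x}) :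
    (1 / 2) * ∑' x, |P x - Hj x| ≤
      2 * ((1 / 2) * ∑' x, |P x - Hi x|)
        + |(∑' x : S, Hj x) - (∑' x : S, P x)| := by
  -- basic summability facts
  have hfs : Summable (fun x => P x - Hi x) := hPs.sub hHis
  have hgs : Summable (fun x => Hj x - Hi x) := hHjs.sub hHis
  have hhs : Summable (fun x => P x - Hj x) := hPs.sub hHjs
  have hf0 : ∑' x, (P x - Hi x) = 0 := by
    rw [Summable.tsum_sub hPs hHis, hP1, hHi1, sub_self]
  have hg0 : ∑' x, (Hj x - Hi x) = 0 := by
    rw [Summable.tsum_sub hHjs hHis, hHj1, hHi1, sub_self]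
  -- Triangle inequality for the sums of absolute values
  have htri : ∑' x, |P x - Hj x| ≤ ∑' x, |P x - Hi x| + ∑' x, |Hj x - Hi x| := by
    rw [← Summable.tsum_add hfs.abs hgs.abs]
    refine Summable.tsum_le_tsum (fun x => ?_) hhs.abs (hfs.abs.add hgs.abs)
    calc |P x - Hj x| = |(P x - Hi x) - (Hj x - Hi x)| := by ring_nf
      _ ≤ |P x - Hi x| + |Hj x - Hi x| := abs_sub _ _
  -- d_TV(Hi, Hj) = Hj(S) - Hi(S)
  have hkey : (∑' x : S, Hj x) - (∑' x : S, Hi x) = (1/2) * ∑' x, |Hj x - Hi x| := by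
    have hjS : Summable fun x : S => Hj (x : X) := hHjs.subtype S
    have hiS : Summable fun x : S => Hi (x : X) := hHis.subtype S
    rw [← Summable.tsum_sub hjS hiS]
    have : (∑' x : S, (Hj x - Hi x)) = ∑' x, max (Hj x - Hi x) 0 := by
      rw [tsum_subtype S (fun y => Hj y - Hi y)]
      refine tsum_congr fun x => ?_
      classical
      by_cases hx : x ∈ S
      · rw [Set.indicator_of_mem hx, max_eq_left]
        rw [hS] at hx
        exact le_of_lt (sub_pos.mpr hx)
      · rw [Set.indicator_of_notMem hx, max_eq_right]
        rw [hS] at hx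
        simp only [Set.mem_setOf_eq, not_lt] at hx
        linarith
    rw [this, tsum_max_zero_eq _ hgs hg0]
  -- |P(S) - Hi(S)| ≤ d_TV(P, Hi)
  have hsemi : |(∑' x : S, P x) - (∑' x : S, Hi x)| ≤ (1/2) * ∑' x, |P x - Hi x| := by
    have hpS : Summable fun x : S => P (x : X) := hPs.subtype S
    have hiS : Summable fun x : S => Hi (x : X) := hHis.subtype S
    rw [← Summable.tsum_sub hpS hiS]
    exact abs_tsum_subtype_le _ hfs hf0 S
  -- put everything together
  have h1 : (∑' x : S, Hj x) - (∑' x : S, Hi x)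
      ≤ |(∑' x : S, Hj x) - (∑' x : S, P x)| + |(∑' x : S, P x) - (∑' x : S, Hi x)| := by
    calc (∑' x : S, Hj x) - (∑' x : S, Hi x)
        = ((∑' x : S, Hj x) - (∑' x : S, P x)) + ((∑' x : S, P x) - (∑' x : S, Hi x)) := by ring
      _ ≤ _ := add_le_add (le_abs_self _) (le_abs_self _)
  linarith
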